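/- For every γ ∈ ℕ, Σ_{τ=0}^{γ} (𝔠̄_{γ,γ,2τ})²/(2τ+2)² = (γ+2)·(2γ+3)·(2γ+5) / (15·π·(γ+1)·(γ+3)). -/

import Mathlib

open MeasureTheory

/-- Gegenbauer (ultraspherical) polynomial `C_n^{(2)}` of degree `n` with parameter `2`,
as a real-valued function. -/
noncomputable def geg (n : ℕ) (y : ℝ) : ℝ :=
  ∑ k ∈ Finset.range (n / 2 + 1),
    (-1:ℝ) ^ k *
      ((Nat.factorial (n - k + 1) : ℝ) /
        ((Nat.factorial k : ℝ) * (Nat.factorial (n - 2 * k) : ℝ))) *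
      (2 * y) ^ (n - 2 * k)

/-- The normalization constant `𝔴_n = √(8/π)/√((n+1)(n+3))`. -/
noncomputable def wYM (n : ℕ) : ℝ :=
  Real.sqrt (8 / Real.pi) / Real.sqrt (((n:ℝ) + 1) * ((n:ℝ) + 3))

/-- The quadratic Fourier coefficients `𝔠̄_{ijm}` of the spherically symmetric equivariant
Yang–Mills equation on the Einstein cylinder. -/
noncomputable def cbar (i j m : ℕ) : ℝ :=
  wYM i * wYM j * wYM m *
    ∫ y in (-1:ℝ)..1, geg i y * geg j y * geg m y * (1 - y ^ 2) ^ ((3:ℝ) / 2)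

/-- The cubic Fourier coefficients `𝔠_{ijkm}` of the spherically symmetric equivariant
Yang–Mills equation on the Einstein cylinder. -/
noncomputable def cquad (i j k m : ℕ) : ℝ :=
  wYM i * wYM j * wYM k * wYM m *
    ∫ y in (-1:ℝ)..1, geg i y * geg j y * geg k y * geg m y * (1 - y ^ 2) ^ ((5:ℝ) / 2)

/-!
Write `T a b c = ∫₋₁¹ C_a C_b C_c (1 - y²)^{3/2} dy`, so that `𝔠̄_{abc} = 𝔴_a 𝔴_b 𝔴_c T a b c`.
The three-term recurrence `(n+2) C_{n+2} = 2(n+3) y C_{n+1} - (n+4) C_n`, applied in any of the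
three slots, moves a factor `y` from one slot to another and so yields linear relations between
the values of `T`. Together with `∫₋₁¹ C_{2σ} (1 - y²)^{3/2} dy = 0` for `σ ≠ 0` (from the moments
of the weight and a telescoping sum), an induction on `γ` gives
`T γ γ (2σ) = π (γ + 1 - σ) (σ + 1)² (γ + σ + 3) / 8` for `σ ≤ γ`, jointly with a closed form for
`T (γ+1) γ (2σ+1)`. Since `𝔴_n² = 8 / (π (n+1)(n+3))`, the weighted sum becomes a sum of a
rational function of `τ`, which telescopes.
-/

open Finset Real intervalIntegral

/-- Unlike the summand in `geg`, this vanishes for `2 * k > n` (through the binomial coefficient),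
so `geg n` is its sum over any range `k < N` with `n / 2 < N`. -/
noncomputable def gegTerm (n k : ℕ) (y : ℝ) : ℝ :=
  (-1) ^ k * ((n - k + 1 : ℕ) : ℝ) * ((n - k).choose k : ℝ) * (2 * y) ^ (n - 2 * k)

lemma factorial_ratio_eq_mul_choose {n k : ℕ} (hk : 2 * k ≤ n) :
    ((n - k + 1).factorial : ℝ) / (k.factorial * (n - 2 * k).factorial)
      = ((n - k + 1 : ℕ) : ℝ) * ((n - k).choose k : ℝ) := by
  have h := Nat.choose_mul_factorial_mul_factorial (show k ≤ n - k by omega)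
  rw [show n - k - k = n - 2 * k by omega] at h
  rw [div_eq_iff (by positivity), Nat.factorial_succ, ← h]
  push_cast
  ring

lemma geg_eq_sum_gegTerm (n : ℕ) {N : ℕ} (hN : n / 2 < N) (y : ℝ) :
    geg n y = ∑ k ∈ range N, gegTerm n k y := by
  rw [geg, sum_congr rfl fun k hk => ?_]
  · refine sum_subset (range_subset_range.2 hN) fun k _ hk => ?_
    rw [gegTerm, Nat.choose_eq_zero_of_lt (by simp at hk; omega)]
    simp
  · rw [factorial_ratio_eq_mul_choose (by simp at hk; omega), gegTerm]
    ring

lemma gegTerm_add_two_zero (n : ℕ) (y : ℝ) :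
    (n + 2 : ℝ) * gegTerm (n + 2) 0 y = 2 * (n + 3) * y * gegTerm (n + 1) 0 y := by
  simp only [gegTerm, pow_zero, Nat.sub_zero, Nat.choose_zero_right, mul_zero]
  push_cast
  ring

lemma gegTerm_add_two_succ (n k : ℕ) (y : ℝ) :
    (n + 2 : ℝ) * gegTerm (n + 2) (k + 1) y
      = 2 * (n + 3) * y * gegTerm (n + 1) (k + 1) y - (n + 4) * gegTerm n k y := by
  rcases lt_trichotomy n (2 * k) with h | rfl | h
  · simp only [gegTerm, Nat.choose_eq_zero_of_lt (show n + 2 - (k + 1) < k + 1 by omega),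
      Nat.choose_eq_zero_of_lt (show n + 1 - (k + 1) < k + 1 by omega),
      Nat.choose_eq_zero_of_lt (show n - k < k by omega)]
    simp
  · simp only [gegTerm, show 2 * k + 2 - (k + 1) = k + 1 by omega,
      show 2 * k + 1 - (k + 1) = k by omega, show 2 * k - k = k by omega,
      show 2 * k + 2 - 2 * (k + 1) = 0 by omega, show 2 * k - 2 * k = 0 by omega,
      Nat.choose_self, Nat.choose_eq_zero_of_lt (show k < k + 1 by omega)]
    push_cast
    ring
  · obtain ⟨m, rfl⟩ : ∃ m, n = 2 * k + 1 + m := ⟨n - 2 * k - 1, by omega⟩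
    have absorb : ((k + m + 1).choose (k + 1) : ℝ) * (k + 1) = (k + m + 1).choose k * (m + 1) := by
      have := Nat.choose_succ_right_eq (k + m + 1) k
      rw [show k + m + 1 - k = m + 1 by omega] at this
      exact_mod_cast this
    simp only [gegTerm, show 2 * k + 1 + m + 2 - (k + 1) = k + m + 2 by omega,
      show 2 * k + 1 + m + 1 - (k + 1) = k + m + 1 by omega,
      show 2 * k + 1 + m - k = k + m + 1 by omega,
      show 2 * k + 1 + m + 2 - 2 * (k + 1) = m + 1 by omega,
      show 2 * k + 1 + m + 1 - 2 * (k + 1) = m by omega,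
      show 2 * k + 1 + m - 2 * k = m + 1 by omega]
    have pascal : ((k + m + 2).choose (k + 1) : ℝ)
        = (k + m + 1).choose k + (k + m + 1).choose (k + 1) := by
      exact_mod_cast Nat.choose_succ_succ' (k + m + 1) k
    push_cast
    linear_combination (-1) ^ k * (2 * y) ^ m * (2 * y) *
      (-absorb - (2 * k + m + 3) * (k + m + 3) * pascal)

lemma geg_add_two (n : ℕ) (y : ℝ) :
    (n + 2 : ℝ) * geg (n + 2) y = 2 * (n + 3) * y * geg (n + 1) y - (n + 4) * geg n y := by
  rw [geg_eq_sum_gegTerm (n + 2) (N := n + 2) (by omega),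
    geg_eq_sum_gegTerm (n + 1) (N := n + 2) (by omega),
    geg_eq_sum_gegTerm n (N := n + 1) (by omega), sum_range_succ' (fun k => gegTerm (n + 2) k y),
    sum_range_succ' (fun k => gegTerm (n + 1) k y),
    mul_add, mul_add, mul_sum, mul_sum, mul_sum, gegTerm_add_two_zero,
    sum_congr rfl fun k _ => gegTerm_add_two_succ n k y, sum_sub_distrib]
  ring

@[fun_prop]
lemma continuous_geg (n : ℕ) : Continuous (geg n) := by
  unfold geg
  fun_prop

lemma continuous_one_sub_sq_rpow {r : ℝ} (hr : 0 ≤ r) : Continuous fun y : ℝ => (1 - y ^ 2) ^ r :=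
  (by fun_prop : Continuous fun y : ℝ => 1 - y ^ 2).rpow_const fun _ => Or.inr hr

lemma integral_pow_add_two_mul_one_sub_sq_rpow (k : ℕ) {r : ℝ} (hr : 0 ≤ r) :
    (k + 2 * r + 3) * ∫ y in (-1:ℝ)..1, y ^ (k + 2) * (1 - y ^ 2) ^ r
      = (k + 1) * ∫ y in (-1:ℝ)..1, y ^ k * (1 - y ^ 2) ^ r := by
  have hw := continuous_one_sub_sq_rpow hr
  have hderiv : ∀ y ∈ Set.uIcc (-1:ℝ) 1,
      HasDerivAt (fun y => y ^ (k + 1) * (1 - y ^ 2) ^ (r + 1))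
        ((k + 1) * (y ^ k * (1 - y ^ 2) ^ r) - (k + 2 * r + 3) * (y ^ (k + 2) * (1 - y ^ 2) ^ r))
        y := by
    intro y hy
    have hy2 : 0 ≤ 1 - y ^ 2 := by
      rw [Set.uIcc_of_le (by norm_num)] at hy
      nlinarith [hy.1, hy.2]
    have h := (hasDerivAt_pow (k + 1) y).fun_mul
      (((hasDerivAt_pow 2 y).const_sub 1).rpow_const (p := r + 1) (Or.inr (by linarith)))
    refine h.congr_deriv ?_
    rw [add_sub_cancel_right, Real.rpow_add_one' hy2 (by linarith)]
    push_cast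
    ring
  have hint : IntervalIntegrable (fun y => (k + 1) * (y ^ k * (1 - y ^ 2) ^ r)
      - (k + 2 * r + 3) * (y ^ (k + 2) * (1 - y ^ 2) ^ r)) MeasureTheory.volume (-1) 1 :=
    (by fun_prop : Continuous _).intervalIntegrable _ _
  have hFTC := integral_eq_sub_of_hasDerivAt hderiv hint
  rw [integral_sub ((by fun_prop : Continuous _).intervalIntegrable _ _)
    ((by fun_prop : Continuous _).intervalIntegrable _ _), intervalIntegral.integral_const_mul,
    intervalIntegral.integral_const_mul] at hFTC
  norm_num [Real.zero_rpow (by linarith : r + 1 ≠ 0)] at hFTC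
  linarith

lemma integral_one_sub_sq_rpow_three_halves :
    ∫ y in (-1:ℝ)..1, (1 - y ^ 2) ^ ((3:ℝ) / 2) = 3 * π / 8 := by
  have hhalf : ∫ y in (-1:ℝ)..1, y ^ 0 * (1 - y ^ 2) ^ ((1:ℝ) / 2) = π / 2 := by
    simpa [Real.sqrt_eq_rpow] using integral_sqrt_one_sub_sq
  have hrec := integral_pow_add_two_mul_one_sub_sq_rpow 0 (r := 1 / 2) (by norm_num)
  have hsplit : Set.EqOn (fun y : ℝ => (1 - y ^ 2) ^ ((3:ℝ) / 2))
      (fun y => y ^ 0 * (1 - y ^ 2) ^ ((1:ℝ) / 2) - y ^ (0 + 2) * (1 - y ^ 2) ^ ((1:ℝ) / 2))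
      (Set.uIcc (-1) 1) := by
    intro y hy
    have hy2 : 0 ≤ 1 - y ^ 2 := by
      rw [Set.uIcc_of_le (by norm_num)] at hy
      nlinarith [hy.1, hy.2]
    dsimp only
    rw [show (3:ℝ) / 2 = 1 / 2 + 1 by norm_num, Real.rpow_add_one' hy2 (by norm_num)]
    ring
  have hc := continuous_one_sub_sq_rpow (r := 1 / 2) (by norm_num)
  rw [integral_congr hsplit, integral_sub ((by fun_prop : Continuous _).intervalIntegrable _ _)
    ((by fun_prop : Continuous _).intervalIntegrable _ _)]
  push_cast at hrec
  linarith

lemma integral_pow_two_mul_one_sub_sq_rpow_three_halves (j : ℕ) :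
    ∫ y in (-1:ℝ)..1, y ^ (2 * j) * (1 - y ^ 2) ^ ((3:ℝ) / 2)
      = 3 * π / 4 * (2 * j).factorial / (4 ^ j * j.factorial * (j + 2).factorial) := by
  induction j with
  | zero => simp [integral_one_sub_sq_rpow_three_halves]; ring
  | succ j ih =>
    have hrec := integral_pow_add_two_mul_one_sub_sq_rpow (2 * j) (r := 3 / 2) (by norm_num)
    rw [ih, show 2 * j + 2 = 2 * (j + 1) by ring] at hrec
    have h2 : ((2 * (j + 1)).factorial : ℝ) = (2 * j + 2) * (2 * j + 1) * (2 * j).factorial := by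
      rw [show 2 * (j + 1) = 2 * j + 1 + 1 by ring, Nat.factorial_succ, Nat.factorial_succ]
      push_cast; ring
    have h3 : ((j + 1 + 2).factorial : ℝ) = (j + 3) * (j + 2).factorial := by
      rw [show j + 1 + 2 = j + 2 + 1 by ring, Nat.factorial_succ]
      push_cast; ring
    rw [h2, h3, Nat.factorial_succ, pow_succ]
    push_cast at hrec ⊢
    field_simp at hrec ⊢
    linear_combination 2 * hrec

noncomputable def gegMomentCoeff (s k : ℕ) : ℝ :=
  (-1) ^ k * (2 * s - k + 1).factorial / (k.factorial * (s - k).factorial * (s - k + 2).factorial)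

/-- The closed form of the partial sums comes from Gosper's algorithm. -/
lemma sum_range_gegMomentCoeff_of_lt {s m : ℕ} (hm : m < s) :
    ∑ k ∈ range (m + 1), gegMomentCoeff s k = (-1) ^ m * (2 * s + 1 - m).factorial /
      (m.factorial * (s - m - 1).factorial * (s - m + 1).factorial * s * (s + 2)) := by
  induction m with
  | zero =>
    obtain ⟨t, rfl⟩ : ∃ t, s = t + 1 := ⟨s - 1, by omega⟩
    simp only [zero_add, sum_range_one, gegMomentCoeff, pow_zero, Nat.factorial_zero,
      Nat.sub_zero, show 2 * (t + 1) + 1 = 2 * t + 3 by omega]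
    rw [show t + 1 + 2 = t + 2 + 1 by omega, Nat.factorial_succ (t + 2), Nat.factorial_succ t]
    push_cast
    field_simp
    ring
  | succ m ih =>
    obtain ⟨d, rfl⟩ : ∃ d, s = m + 2 + d := ⟨s - m - 2, by omega⟩
    rw [sum_range_succ, ih (by omega), gegMomentCoeff]
    simp only [show 2 * (m + 2 + d) + 1 - m = m + 2 * d + 4 + 1 by omega,
      show 2 * (m + 2 + d) - (m + 1) + 1 = m + 2 * d + 4 by omega,
      show 2 * (m + 2 + d) + 1 - (m + 1) = m + 2 * d + 4 by omega,
      show m + 2 + d - m - 1 = d + 1 by omega, show m + 2 + d - m + 1 = d + 2 + 1 by omega,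
      show m + 2 + d - (m + 1) = d + 1 by omega,
      show d + 1 + 2 = d + 2 + 1 by omega,
      Nat.factorial_succ (m + 2 * d + 4), Nat.factorial_succ (d + 2), Nat.factorial_succ d,
      Nat.factorial_succ m, pow_succ]
    push_cast
    field_simp
    ring

lemma sum_range_gegMomentCoeff {s : ℕ} (hs : s ≠ 0) :
    ∑ k ∈ range (s + 1), gegMomentCoeff s k = 0 := by
  obtain ⟨t, rfl⟩ : ∃ t, s = t + 1 := ⟨s - 1, by omega⟩
  rw [sum_range_succ, sum_range_gegMomentCoeff_of_lt (by omega), gegMomentCoeff]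
  simp only [show 2 * (t + 1) + 1 - t = t + 2 + 1 by omega, show t + 1 - t - 1 = 0 by omega,
    show t + 1 - t + 1 = 2 by omega, show 2 * (t + 1) - (t + 1) + 1 = t + 2 by omega,
    Nat.sub_self, zero_add, Nat.factorial_succ (t + 2), Nat.factorial_succ (t + 1),
    Nat.factorial_succ t, pow_succ, Nat.factorial_zero, Nat.factorial_two]
  push_cast
  field_simp
  ring

lemma integral_geg_two_mul_mul_one_sub_sq_rpow (σ : ℕ) :
    ∫ y in (-1:ℝ)..1, geg (2 * σ) y * (1 - y ^ 2) ^ ((3:ℝ) / 2)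
      = 3 * π / 4 * ∑ k ∈ range (σ + 1), gegMomentCoeff σ k := by
  have hw := continuous_one_sub_sq_rpow (r := 3 / 2) (by norm_num)
  simp only [geg, show 2 * σ / 2 = σ by omega, sum_mul]
  rw [integral_finsetSum fun k _ => (by fun_prop : Continuous _).intervalIntegrable _ _,
    mul_sum]
  refine sum_congr rfl fun k hk => ?_
  have hk : k ≤ σ := by simp at hk; omega
  have hterm : ∀ y : ℝ, (-1) ^ k * ((2 * σ - k + 1).factorial /
        (k.factorial * (2 * σ - 2 * k).factorial : ℝ)) * (2 * y) ^ (2 * σ - 2 * k)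
          * (1 - y ^ 2) ^ ((3:ℝ) / 2)
      = ((-1) ^ k * ((2 * σ - k + 1).factorial /
        (k.factorial * (2 * (σ - k)).factorial : ℝ)) * 4 ^ (σ - k))
          * (y ^ (2 * (σ - k)) * (1 - y ^ 2) ^ ((3:ℝ) / 2)) := by
    intro y
    rw [show 2 * σ - 2 * k = 2 * (σ - k) by omega, mul_pow, pow_mul, pow_mul]
    ring
  simp only [hterm]
  rw [intervalIntegral.integral_const_mul, integral_pow_two_mul_one_sub_sq_rpow_three_halves,
    gegMomentCoeff]
  field_simp

noncomputable def gegTriple (a b c : ℕ) : ℝ :=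
  ∫ y in (-1:ℝ)..1, geg a y * geg b y * geg c y * (1 - y ^ 2) ^ ((3:ℝ) / 2)

noncomputable def gegTripleY (a b c : ℕ) : ℝ :=
  ∫ y in (-1:ℝ)..1, y * geg a y * geg b y * geg c y * (1 - y ^ 2) ^ ((3:ℝ) / 2)

lemma gegTriple_comm (a b c : ℕ) : gegTriple a b c = gegTriple b a c := by
  simp only [gegTriple, mul_comm (geg a _) (geg b _)]

lemma gegTriple_right_comm (a b c : ℕ) : gegTriple a b c = gegTriple a c b := by
  simp only [gegTriple, mul_right_comm _ (geg b _) (geg c _)]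

lemma gegTripleY_comm (a b c : ℕ) : gegTripleY a b c = gegTripleY b a c := by
  simp only [gegTripleY, mul_right_comm _ (geg a _) (geg b _)]

lemma gegTripleY_right_comm (a b c : ℕ) : gegTripleY a b c = gegTripleY a c b := by
  simp only [gegTripleY, mul_right_comm _ (geg b _) (geg c _)]

lemma gegTriple_zero_zero (c : ℕ) :
    gegTriple 0 0 c = ∫ y in (-1:ℝ)..1, geg c y * (1 - y ^ 2) ^ ((3:ℝ) / 2) := by
  simp [gegTriple, geg]

lemma gegTriple_one (a b : ℕ) : gegTriple a b 1 = 4 * gegTripleY a b 0 := by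
  rw [gegTriple, gegTripleY, ← intervalIntegral.integral_const_mul]
  congr 1 with y
  simp [geg]
  ring

lemma gegTriple_add_two (a b n : ℕ) :
    (n + 2 : ℝ) * gegTriple a b (n + 2)
      = 2 * (n + 3) * gegTripleY a b (n + 1) - (n + 4) * gegTriple a b n := by
  have hw := continuous_one_sub_sq_rpow (r := 3 / 2) (by norm_num)
  rw [gegTriple, gegTriple, gegTripleY, ← intervalIntegral.integral_const_mul,
    ← intervalIntegral.integral_const_mul, ← intervalIntegral.integral_const_mul,
    ← integral_sub ((by fun_prop : Continuous _).intervalIntegrable _ _)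
      ((by fun_prop : Continuous _).intervalIntegrable _ _)]
  congr 1 with y
  linear_combination geg a y * geg b y * (1 - y ^ 2) ^ ((3:ℝ) / 2) * geg_add_two n y

/-- The truncated subtraction `γ + 1 - σ` makes both closed forms vanish for `σ > γ`, as the
integrals do by orthogonality. -/
noncomputable def gegTripleDiag (γ σ : ℕ) : ℝ :=
  π * ((γ + 1 - σ : ℕ) : ℝ) * (σ + 1) ^ 2 * (γ + σ + 3) / 8

noncomputable def gegTripleSubdiag (γ σ : ℕ) : ℝ :=
  π * ((γ + 1 - σ : ℕ) : ℝ) * (σ + 1) * (σ + 2) * (γ + σ + 4) / 8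

lemma gegTripleDiag_of_le {γ σ : ℕ} (h : σ ≤ γ + 1) :
    gegTripleDiag γ σ = π * (γ + 1 - σ) * (σ + 1) ^ 2 * (γ + σ + 3) / 8 := by
  rw [gegTripleDiag, Nat.cast_sub h]
  push_cast
  ring

lemma gegTripleDiag_of_ge {γ σ : ℕ} (h : γ + 1 ≤ σ) : gegTripleDiag γ σ = 0 := by
  simp [gegTripleDiag, Nat.sub_eq_zero_of_le h]

lemma gegTripleSubdiag_of_le {γ σ : ℕ} (h : σ ≤ γ + 1) :
    gegTripleSubdiag γ σ = π * (γ + 1 - σ) * (σ + 1) * (σ + 2) * (γ + σ + 4) / 8 := by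
  rw [gegTripleSubdiag, Nat.cast_sub h]
  push_cast
  ring

lemma gegTripleSubdiag_of_ge {γ σ : ℕ} (h : γ + 1 ≤ σ) : gegTripleSubdiag γ σ = 0 := by
  simp [gegTripleSubdiag, Nat.sub_eq_zero_of_le h]

lemma gegTriple_zero_zero_two_mul (σ : ℕ) : gegTriple 0 0 (2 * σ) = gegTripleDiag 0 σ := by
  rw [gegTriple_zero_zero, integral_geg_two_mul_mul_one_sub_sq_rpow]
  rcases Nat.eq_zero_or_pos σ with rfl | hσ
  · simp [gegMomentCoeff, gegTripleDiag]
    ring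
  · rw [sum_range_gegMomentCoeff hσ.ne', gegTripleDiag_of_ge hσ, mul_zero]

lemma gegTriple_one_zero_two_mul_add_one (σ : ℕ) :
    gegTriple 1 0 (2 * σ + 1) = gegTripleSubdiag 0 σ := by
  have hrec := gegTriple_add_two 0 0 (2 * σ)
  rw [gegTriple_zero_zero_two_mul, show 2 * σ + 2 = 2 * (σ + 1) by ring,
    gegTriple_zero_zero_two_mul] at hrec
  rw [gegTriple_comm, gegTriple_right_comm, gegTriple_one, gegTripleY_right_comm]
  rcases Nat.eq_zero_or_pos σ with rfl | hσ
  · norm_num [gegTripleDiag, gegTripleSubdiag] at hrec ⊢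
    linarith
  · rw [gegTripleDiag_of_ge (by omega), gegTripleDiag_of_ge (by omega)] at hrec
    rw [gegTripleSubdiag_of_ge (by omega)]
    push_cast at hrec
    nlinarith

lemma gegTriple_add_two_left (n b c : ℕ) :
    (n + 2 : ℝ) * gegTriple (n + 2) b c
      = 2 * (n + 3) * gegTripleY (n + 1) b c - (n + 4) * gegTriple n b c := by
  have h := gegTriple_add_two b c n
  rwa [gegTriple_right_comm b c, gegTriple_comm b, gegTriple_right_comm b c, gegTriple_comm b,
    gegTripleY_right_comm b c, gegTripleY_comm b] at h

lemma gegTriple_one_one_two_mul (σ : ℕ) : gegTriple 1 1 (2 * σ) = gegTripleDiag 1 σ := by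
  rcases σ with _ | s
  · have h := gegTriple_one_zero_two_mul_add_one 0
    norm_num [gegTripleDiag, gegTripleSubdiag] at h ⊢
    rw [gegTriple_right_comm, h]
  · have hrec := gegTriple_add_two 1 0 (2 * s + 1)
    rw [show 2 * s + 1 + 2 = 2 * (s + 1) + 1 by ring, show 2 * s + 1 + 1 = 2 * (s + 1) by ring,
      gegTriple_one_zero_two_mul_add_one, gegTriple_one_zero_two_mul_add_one,
      gegTripleSubdiag_of_ge (show 0 + 1 ≤ s + 1 by omega)] at hrec
    rw [gegTriple_right_comm, gegTriple_one, gegTripleY_right_comm]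
    rcases Nat.eq_zero_or_pos s with rfl | hs
    · norm_num [gegTripleDiag, gegTripleSubdiag] at hrec ⊢
      linarith
    · rw [gegTripleSubdiag_of_ge (by omega)] at hrec
      rw [gegTripleDiag_of_ge (by omega)]
      push_cast at hrec
      nlinarith

lemma gegTriple_subdiag_succ {γ : ℕ}
    (hdiag : ∀ σ, gegTriple (γ + 1) (γ + 1) (2 * σ) = gegTripleDiag (γ + 1) σ)
    (hsub : ∀ σ, gegTriple (γ + 1) γ (2 * σ + 1) = gegTripleSubdiag γ σ) (σ : ℕ) :
    gegTriple (γ + 2) (γ + 1) (2 * σ + 1) = gegTripleSubdiag (γ + 1) σ := by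
  have h1 := gegTriple_add_two_left γ (γ + 1) (2 * σ + 1)
  have h2 := gegTriple_add_two (γ + 1) (γ + 1) (2 * σ)
  rw [gegTriple_comm γ, hsub] at h1
  rw [show 2 * σ + 2 = 2 * (σ + 1) by ring, hdiag, hdiag] at h2
  push_cast at h2
  have key : (2 * σ + 3 : ℝ) * (γ + 2) * gegTriple (γ + 2) (γ + 1) (2 * σ + 1)
      = (γ + 3) * ((2 * σ + 2) * gegTripleDiag (γ + 1) (σ + 1)
          + (2 * σ + 4) * gegTripleDiag (γ + 1) σ)
        - (2 * σ + 3) * (γ + 4) * gegTripleSubdiag γ σ := by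
    linear_combination (2 * σ + 3) * h1 - (γ + 3) * h2
  rw [← mul_right_inj' (by positivity : (2 * σ + 3 : ℝ) * (γ + 2) ≠ 0), key]
  rcases le_or_gt σ (γ + 1) with h | h
  · simp (disch := omega) only [gegTripleDiag_of_le, gegTripleSubdiag_of_le]
    push_cast
    ring
  · simp (disch := omega) only [gegTripleDiag_of_ge, gegTripleSubdiag_of_ge]
    ring

lemma gegTriple_diag_succ_succ {γ : ℕ}
    (hdiag : ∀ σ, gegTriple γ γ (2 * σ) = gegTripleDiag γ σ)
    (hsub : ∀ σ, gegTriple (γ + 1) γ (2 * σ + 1) = gegTripleSubdiag γ σ)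
    (hsub' : ∀ σ, gegTriple (γ + 2) (γ + 1) (2 * σ + 1) = gegTripleSubdiag (γ + 1) σ)
    (σ : ℕ) : gegTriple (γ + 2) (γ + 2) (2 * σ) = gegTripleDiag (γ + 2) σ := by
  -- Expand both factors `C_{γ+2}` by the recurrence, then move each freed `y` onto `C_{2σ}`.
  have hA := gegTriple_add_two_left γ (γ + 2) (2 * σ)
  have hB := gegTriple_add_two_left γ γ (2 * σ)
  rw [gegTriple_comm (γ + 2) γ, gegTripleY_comm (γ + 1) γ, hdiag] at hB
  rcases σ with _ | s
  · have hC := gegTriple_one (γ + 1) (γ + 2)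
    have hD := gegTriple_one γ (γ + 1)
    have h0 := hsub 0
    have h0' := hsub' 0
    simp only [Nat.mul_zero, zero_add] at hA hB h0 h0' ⊢
    rw [gegTriple_comm, h0'] at hC
    rw [gegTriple_comm, h0] at hD
    have key : 2 * (γ + 2 : ℝ) ^ 2 * gegTriple (γ + 2) (γ + 2) 0
        = (γ + 3) * (γ + 2) * gegTripleSubdiag (γ + 1) 0 - (γ + 4) * (γ + 3) * gegTripleSubdiag γ 0
          + 2 * (γ + 4) ^ 2 * gegTripleDiag γ 0 := by
      linear_combination 2 * (γ + 2) * hA - 2 * (γ + 4) * hB - (γ + 3) * (γ + 2) * hC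
        + (γ + 4) * (γ + 3) * hD
    rw [← mul_right_inj' (by positivity : 2 * (γ + 2 : ℝ) ^ 2 ≠ 0), key]
    simp (disch := omega) only [gegTripleDiag_of_le, gegTripleSubdiag_of_le]
    push_cast
    ring
  · have hC := gegTriple_add_two (γ + 1) (γ + 2) (2 * s + 1)
    have hD := gegTriple_add_two γ (γ + 1) (2 * s + 1)
    rw [show 2 * s + 1 + 2 = 2 * (s + 1) + 1 by ring, show 2 * s + 1 + 1 = 2 * (s + 1) by ring,
      gegTriple_comm (γ + 1), gegTriple_comm (γ + 1), hsub', hsub'] at hC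
    rw [show 2 * s + 1 + 2 = 2 * (s + 1) + 1 by ring, show 2 * s + 1 + 1 = 2 * (s + 1) by ring,
      gegTriple_comm γ, gegTriple_comm γ, hsub, hsub] at hD
    push_cast at hA hB hC hD
    have key : (2 * s + 4) * (γ + 2 : ℝ) ^ 2 * gegTriple (γ + 2) (γ + 2) (2 * (s + 1))
        = (γ + 3) * (γ + 2) * ((2 * s + 3) * gegTripleSubdiag (γ + 1) (s + 1)
            + (2 * s + 5) * gegTripleSubdiag (γ + 1) s)
          - (γ + 4) * (γ + 3) * ((2 * s + 3) * gegTripleSubdiag γ (s + 1)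
            + (2 * s + 5) * gegTripleSubdiag γ s)
          + (2 * s + 4) * (γ + 4) ^ 2 * gegTripleDiag γ (s + 1) := by
      linear_combination (2 * s + 4) * ((γ + 2) * hA - (γ + 4) * hB)
        - (γ + 3) * (γ + 2) * hC + (γ + 4) * (γ + 3) * hD
    rw [← mul_right_inj' (by positivity : (2 * s + 4) * (γ + 2 : ℝ) ^ 2 ≠ 0), key]
    rcases lt_trichotomy s (γ + 1) with h | rfl | h
    · simp (disch := omega) only [gegTripleDiag_of_le, gegTripleSubdiag_of_le]
      push_cast
      ring
    · simp (disch := omega) only [gegTripleDiag_of_le, gegTripleDiag_of_ge,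
        gegTripleSubdiag_of_le, gegTripleSubdiag_of_ge]
      push_cast
      ring
    · simp (disch := omega) only [gegTripleDiag_of_ge, gegTripleSubdiag_of_ge]
      ring

lemma gegTriple_closed_forms (γ : ℕ) :
    (∀ σ, gegTriple γ γ (2 * σ) = gegTripleDiag γ σ) ∧
      (∀ σ, gegTriple (γ + 1) γ (2 * σ + 1) = gegTripleSubdiag γ σ) ∧
      (∀ σ, gegTriple (γ + 1) (γ + 1) (2 * σ) = gegTripleDiag (γ + 1) σ) := by
  induction γ with
  | zero =>
    exact ⟨gegTriple_zero_zero_two_mul, gegTriple_one_zero_two_mul_add_one,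
      gegTriple_one_one_two_mul⟩
  | succ γ ih =>
    obtain ⟨hdiag, hsub, hdiag'⟩ := ih
    have hsub' := gegTriple_subdiag_succ hdiag' hsub
    exact ⟨hdiag', hsub', gegTriple_diag_succ_succ hdiag hsub hsub'⟩

lemma wYM_sq (n : ℕ) : wYM n ^ 2 = 8 / (π * (n + 1) * (n + 3)) := by
  rw [wYM, div_pow, Real.sq_sqrt (by positivity), Real.sq_sqrt (by positivity)]
  field_simp

lemma sum_range_diag_sq_div (x : ℝ) (n : ℕ) :
    ∑ τ ∈ range n, (x - τ + 1) ^ 2 * (τ + 1) ^ 2 * (x + τ + 3) ^ 2 / ((2 * τ + 1) * (2 * τ + 3))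
      = (201 * n + 162 * n ^ 2 - 75 * n ^ 3 - 30 * n ^ 4 + 9 * n ^ 5 + 3 * n ^ 6
        + 440 * x * n + 400 * x * n ^ 2 - 80 * x * n ^ 3 - 40 * x * n ^ 4
        + 350 * x ^ 2 * n + 340 * x ^ 2 * n ^ 2 - 20 * x ^ 2 * n ^ 3 - 10 * x ^ 2 * n ^ 4
        + 120 * x ^ 3 * n + 120 * x ^ 3 * n ^ 2 + 15 * x ^ 4 * n + 15 * x ^ 4 * n ^ 2)
        / (30 * (2 * n + 1)) := by
  induction n with
  | zero => simp
  | succ n ih =>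
    rw [sum_range_succ, ih, div_add_div _ _ (by positivity) (by positivity),
      div_eq_div_iff (by positivity) (by positivity)]
    push_cast
    ring

/-- Closed evaluation of the weighted square sum of the coefficients `𝔠̄_{γ,γ,2τ}`. -/
theorem cbar_weighted_square_sum (γ : ℕ) :
    ∑ τ ∈ Finset.range (γ + 1), (cbar γ γ (2 * τ)) ^ 2 / (2 * (τ:ℝ) + 2) ^ 2 =
      ((γ:ℝ) + 2) * (2 * (γ:ℝ) + 3) * (2 * (γ:ℝ) + 5) /
        (15 * Real.pi * ((γ:ℝ) + 1) * ((γ:ℝ) + 3)) := by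
  have hterm : ∀ τ ∈ range (γ + 1), cbar γ γ (2 * τ) ^ 2 / (2 * (τ:ℝ) + 2) ^ 2
      = 2 / (π * (γ + 1) ^ 2 * (γ + 3) ^ 2)
        * ((γ - τ + 1) ^ 2 * (τ + 1) ^ 2 * (γ + τ + 3) ^ 2 / ((2 * τ + 1) * (2 * τ + 3))) := by
    intro τ hτ
    have hcbar : cbar γ γ (2 * τ) = wYM γ ^ 2 * wYM (2 * τ) * gegTripleDiag γ τ := by
      rw [← (gegTriple_closed_forms γ).1 τ, gegTriple, cbar]
      ring
    rw [hcbar, mul_pow, mul_pow, wYM_sq, wYM_sq,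
      gegTripleDiag_of_le (by simp at hτ; omega)]
    push_cast
    field_simp
    ring
  rw [sum_congr rfl hterm, ← mul_sum, sum_range_diag_sq_div]
  push_cast
  field_simp
  ring
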